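/- arXiv:1201.5607 — 5 statements merged into one kernel-verified Lean document; each statement's English description precedes it below -/
import Mathlib

section
/- Let d ≥ 1 and let (φₙ)_{n=0}^∞ be a basis in H(ℂ^d) that has the Global Bohr Property. Then at least one of the functions φₙ is a constant. -/
open Filter Topology Metric

/-- `ℂ^d` with the Euclidean norm. -/
abbrev Cd (d : ℕ) := EuclideanSpace ℂ (Fin d)

variable {E : Type*} [NormedAddCommGroup E] [NormedSpace ℂ E]

/-- `supNorm f K = sup_{z ∈ K} |f z|`. -/
noncomputable def supNorm (f : E → ℂ) (K : Set E) : ℝ :=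
  sSup ((fun z => ‖f z‖) '' K)

/-- The series `∑ cₙ φₙ` converges to `f` uniformly on every compact subset of `D`. -/
def ExpandsTo (φ : ℕ → E → ℂ) (c : ℕ → ℂ) (f : E → ℂ) (D : Set E) : Prop :=
  ∀ K : Set E, K ⊆ D → IsCompact K →
    TendstoUniformlyOn (fun N z => ∑ n ∈ Finset.range N, c n * φ n z) f atTop K

/-- `φ` is a basis of the space of analytic functions on `D`: each `φₙ` is analytic on `D`
and every analytic function on `D` has a unique expansion converging uniformly on
compact subsets of `D`. -/
def IsBasisOn (φ : ℕ → E → ℂ) (D : Set E) : Prop :=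
  (∀ n, DifferentiableOn ℂ (φ n) D) ∧
    ∀ f : E → ℂ, DifferentiableOn ℂ f D → ∃! c : ℕ → ℂ, ExpandsTo φ c f D

/-- The Global Bohr Property of a basis `φ`, relative to `D`. -/
def HasGBP (φ : ℕ → E → ℂ) (D : Set E) : Prop :=
  ∀ K : Set E, K ⊆ D → IsCompact K →
    ∃ K₁ : Set E, K₁ ⊆ D ∧ IsCompact K₁ ∧ K ⊆ K₁ ∧
      ∀ (f : E → ℂ) (c : ℕ → ℂ), DifferentiableOn ℂ f D → ExpandsTo φ c f D →
        ∀ N : ℕ, ∑ n ∈ Finset.range N, ‖c n‖ * supNorm (φ n) K ≤ supNorm f K₁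

/-- Every bounded analytic function on `D` is constant. -/
def LiouvilleProperty (D : Set E) : Prop :=
  ∀ f : E → ℂ, DifferentiableOn ℂ f D → (∃ M : ℝ, ∀ z ∈ D, ‖f z‖ ≤ M) →
    ∀ z ∈ D, ∀ w ∈ D, f z = f w

/-- The Schwarz Property of a domain `D`. -/
def SchwarzProperty (D : Set E) : Prop :=
  ∀ z₀ ∈ D, ∀ K : Set E, K ⊆ D → IsCompact K → z₀ ∈ K → ∀ δ : ℝ, 0 < δ →
    ∃ K₁ : Set E, K₁ ⊆ D ∧ IsCompact K₁ ∧ K ⊆ K₁ ∧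
      ∀ (U : Set E) (f : E → ℂ), IsOpen U → K₁ ⊆ U → DifferentiableOn ℂ f U →
        supNorm (fun z => f z - f z₀) K ≤ δ * supNorm (fun z => f z - f z₀) K₁

/-- An exhaustion of `D` by relatively compact open sets. -/
def IsExhaustion (Dn : ℕ → Set E) (D : Set E) : Prop :=
  (∀ n, IsOpen (Dn n)) ∧ (∀ n, IsCompact (closure (Dn n))) ∧
    (∀ n, closure (Dn n) ⊆ Dn (n + 1)) ∧ (⋃ n, Dn n) = D

/-- `gammaFn U z₀ z = sup {|f z| : f analytic on U, f z₀ = 0, sup_U |f| ≤ 1}`. -/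
noncomputable def gammaFn (U : Set E) (z₀ z : E) : ℝ :=
  sSup {t : ℝ | ∃ f : E → ℂ, DifferentiableOn ℂ f U ∧ f z₀ = 0 ∧
    (∀ w ∈ U, ‖f w‖ ≤ 1) ∧ t = ‖f z‖}


/-- if a basis `(φₙ)` in `H(ℂ^d)` has the Global Bohr Property then at
least one of the `φₙ` is a constant. -/
theorem stmt2 (d : ℕ) (hd : 1 ≤ d) (φ : ℕ → Cd d → ℂ)
    (hbasis : IsBasisOn φ (Set.univ : Set (Cd d)))
    (hGBP : HasGBP φ (Set.univ : Set (Cd d))) :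
    ∃ n : ℕ, ∃ a : ℂ, ∀ z : Cd d, φ n z = a := by
  -- Expand the constant function 1
  obtain ⟨c, hc, -⟩ := hbasis.2 (fun _ => 1) (differentiableOn_const 1)
  -- Some coefficient is nonzero
  have hne : ∃ n, c n ≠ 0 := by
    by_contra h
    push_neg at h
    have h0 : TendstoUniformlyOn (fun N z => ∑ n ∈ Finset.range N, c n * φ n z)
        (fun _ => 1) atTop ({0} : Set (Cd d)) :=
      hc {0} (Set.subset_univ _) isCompact_singleton
    have := (h0.tendsto_at (Set.mem_singleton (0 : Cd d)))
    simp only [h, zero_mul, Finset.sum_const_zero] at this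
    have h1 : (1 : ℂ) = 0 := tendsto_nhds_unique this tendsto_const_nhds
    exact one_ne_zero h1
  obtain ⟨n, hn⟩ := hne
  -- φ n is bounded: for each z, ‖c n‖ * ‖φ n z‖ ≤ 1
  have hb : ∀ z : Cd d, ‖φ n z‖ ≤ 1 / ‖c n‖ := by
    intro z
    obtain ⟨K₁, -, -, hKK₁, hineq⟩ :=
      hGBP {z} (Set.subset_univ _) isCompact_singleton
    have key := hineq (fun _ => 1) c (differentiableOn_const 1) hc (n + 1)
    -- supNorm of 1 on K₁ is 1
    have hK₁ne : K₁.Nonempty := ⟨z, hKK₁ rfl⟩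
    have hsup1 : supNorm (fun _ => (1 : ℂ)) K₁ = 1 := by
      unfold supNorm
      have : (fun w : Cd d => ‖(1 : ℂ)‖) '' K₁ = {1} := by
        rw [show (fun w : Cd d => ‖(1 : ℂ)‖) = fun _ => (1:ℝ) by simp]
        exact Set.Nonempty.image_const hK₁ne 1
      rw [this, csSup_singleton]
    have hsupz : ∀ m, supNorm (φ m) {z} = ‖φ m z‖ := by
      intro m
      unfold supNorm
      rw [Set.image_singleton, csSup_singleton]
    rw [hsup1] at key
    have hterm : ‖c n‖ * ‖φ n z‖ ≤ 1 := by
      calc ‖c n‖ * ‖φ n z‖ = ‖c n‖ * supNorm (φ n) {z} := by rw [hsupz]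
        _ ≤ ∑ m ∈ Finset.range (n + 1), ‖c m‖ * supNorm (φ m) {z} := by
            apply Finset.single_le_sum (f := fun m => ‖c m‖ * supNorm (φ m) {z})
            · intro m _
              rw [hsupz]
              positivity
            · exact Finset.self_mem_range_succ n
        _ ≤ 1 := key
    have hcpos : 0 < ‖c n‖ := norm_pos_iff.mpr hn
    rw [le_div_iff₀ hcpos, mul_comm]
    exact hterm
  -- Liouville
  have hdiff : Differentiable ℂ (φ n) := by
    have := hbasis.1 n
    rwa [← differentiableOn_univ]
  have hbdd : Bornology.IsBounded (Set.range (φ n)) := by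
    rw [isBounded_iff_forall_norm_le]
    exact ⟨1 / ‖c n‖, by rintro x ⟨z, rfl⟩; exact hb z⟩
  exact ⟨n, φ n 0, fun z => hdiff.apply_eq_apply_of_bounded hbdd z 0⟩
end

section
/- Let d ≥ 1, let (φₙ)_{n=0}^∞ be a basis in H(ℂ^d) with φ₀ ≡ 1, and let K ⊆ K₁ be compact subsets of ℂ^d such that every entire function h = ∑_{n=0}^∞ hₙ φₙ satisfies ∑_{n=0}^∞ |hₙ| |φₙ|_K ≤ |h|_{K₁}. Let G ⊇ K₁ be a domain (nonempty open connected set) such that (φₙ) is also a basis in H(G). Then every bounded analytic function f on G with expansion f = ∑_{n=0}^∞ fₙ φₙ in H(G) satisfies ∑_{n=0}^∞ |fₙ| |φₙ|_K ≤ sup_{z∈G} |f(z)|. -/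
open Filter Topology Metric

variable {E : Type*} [NormedAddCommGroup E] [NormedSpace ℂ E]

/-! The partial sums `Sₘ = ∑_{n<m} fₙ φₙ` are entire with the finite expansion `(f₀, …, fₘ₋₁, 0, …)`,
so the hypothesis gives `∑_{n<m} |fₙ| |φₙ|_K ≤ |Sₘ|_{K₁}`. Since `Sₘ → f` uniformly on the compact
set `K₁ ⊆ G`, eventually `|Sₘ|_{K₁} ≤ sup_G |f| + ε`, and the left-hand side increases with `m`. -/

open Finset

lemma supNorm_nonneg {X : Type*} (f : X → ℂ) (K : Set X) : 0 ≤ supNorm f K :=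
  Real.sSup_nonneg <| by rintro _ ⟨z, -, rfl⟩; exact norm_nonneg _

lemma supNorm_le_of_forall_le {X : Type*} {f : X → ℂ} {K : Set X} {M : ℝ} (hM : 0 ≤ M)
    (h : ∀ z ∈ K, ‖f z‖ ≤ M) : supNorm f K ≤ M :=
  Real.sSup_le (by rintro _ ⟨z, hz, rfl⟩; exact h z hz) hM

lemma norm_le_supNorm {X : Type*} {f : X → ℂ} {K : Set X}
    (hbdd : ∃ M : ℝ, ∀ z ∈ K, ‖f z‖ ≤ M) {z : X} (hz : z ∈ K) : ‖f z‖ ≤ supNorm f K := by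
  obtain ⟨M, hM⟩ := hbdd
  exact le_csSup ⟨M, by rintro _ ⟨w, hw, rfl⟩; exact hM w hw⟩ ⟨z, hz, rfl⟩

lemma TendstoUniformlyOn.eventually_supNorm_le {X ι : Type*} {p : Filter ι} {F : ι → X → ℂ}
    {f : X → ℂ} {K : Set X} (hF : TendstoUniformlyOn F f p K) {M ε : ℝ} (hM : 0 ≤ M)
    (hf : ∀ z ∈ K, ‖f z‖ ≤ M) (hε : 0 < ε) : ∀ᶠ i in p, supNorm (F i) K ≤ M + ε := by
  filter_upwards [Metric.tendstoUniformlyOn_iff.mp hF ε hε] with i hi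
  refine supNorm_le_of_forall_le (by positivity) fun z hz => ?_
  calc ‖F i z‖ ≤ ‖f z‖ + ‖F i z - f z‖ := norm_le_norm_add_norm_sub' _ _
    _ ≤ M + ε := by
      rw [← dist_eq_norm, dist_comm]
      exact add_le_add (hf z hz) (hi z hz).le

lemma sum_range_ite_lt_mul (c : ℕ → ℂ) (g : ℕ → ℂ) {m N : ℕ} (hmN : m ≤ N) :
    ∑ n ∈ range N, (if n < m then c n else 0) * g n = ∑ n ∈ range m, c n * g n := by
  have hfilter : (range N).filter (· < m) = range m := by
    ext n
    simp only [mem_filter, mem_range]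
    omega
  simp only [ite_mul, zero_mul]
  rw [← sum_filter, hfilter]

lemma expandsTo_partialSum {X : Type*} [NormedAddCommGroup X] (φ : ℕ → X → ℂ) (c : ℕ → ℂ)
    (m : ℕ) (D : Set X) :
    ExpandsTo φ (fun n => if n < m then c n else 0) (fun z => ∑ n ∈ range m, c n * φ n z) D := by
  intro K _ _
  refine Metric.tendstoUniformlyOn_iff.mpr fun ε hε => ?_
  filter_upwards [eventually_ge_atTop m] with N hmN z _
  rw [sum_range_ite_lt_mul c (φ · z) hmN, dist_self]
  exact hε

lemma sum_le_supNorm_partialSum {φ : ℕ → E → ℂ} (hφ : ∀ n, Differentiable ℂ (φ n))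
    {K K₁ : Set E}
    (hBohr : ∀ (h : E → ℂ) (c : ℕ → ℂ), Differentiable ℂ h → ExpandsTo φ c h Set.univ →
      ∀ N : ℕ, ∑ n ∈ range N, ‖c n‖ * supNorm (φ n) K ≤ supNorm h K₁)
    (c : ℕ → ℂ) (m : ℕ) :
    ∑ n ∈ range m, ‖c n‖ * supNorm (φ n) K ≤ supNorm (fun z => ∑ n ∈ range m, c n * φ n z) K₁ := by
  have hdiff : Differentiable ℂ fun z => ∑ n ∈ range m, c n * φ n z :=
    Differentiable.fun_sum fun n _ => (differentiable_const _).mul (hφ n)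
  calc ∑ n ∈ range m, ‖c n‖ * supNorm (φ n) K
      = ∑ n ∈ range m, ‖if n < m then c n else 0‖ * supNorm (φ n) K :=
        sum_congr rfl fun n hn => by rw [if_pos (mem_range.mp hn)]
    _ ≤ _ := hBohr _ _ hdiff (expandsTo_partialSum φ c m Set.univ) m

theorem stmt10_general (d : ℕ) (φ : ℕ → Cd d → ℂ)
    (hbasis : IsBasisOn φ (Set.univ : Set (Cd d)))
    (K K₁ : Set (Cd d)) (hK₁ : IsCompact K₁)
    (hBohr : ∀ (h : Cd d → ℂ) (c : ℕ → ℂ), Differentiable ℂ h →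
      ExpandsTo φ c h (Set.univ : Set (Cd d)) →
      ∀ N : ℕ, ∑ n ∈ Finset.range N, ‖c n‖ * supNorm (φ n) K ≤ supNorm h K₁)
    (G : Set (Cd d)) (hK₁G : K₁ ⊆ G)
    (f : Cd d → ℂ) (c : ℕ → ℂ)
    (hbd : ∃ M : ℝ, ∀ z ∈ G, ‖f z‖ ≤ M) (hexp : ExpandsTo φ c f G) :
    ∀ N : ℕ, ∑ n ∈ Finset.range N, ‖c n‖ * supNorm (φ n) K ≤ supNorm f G := by
  intro N
  have hfK₁ : ∀ z ∈ K₁, ‖f z‖ ≤ supNorm f G := fun z hz => norm_le_supNorm hbd (hK₁G hz)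
  refine le_of_forall_pos_le_add fun ε hε => ?_
  obtain ⟨m, hNm, hm⟩ := ((eventually_ge_atTop N).and
    ((hexp K₁ hK₁G hK₁).eventually_supNorm_le (supNorm_nonneg f G) hfK₁ hε)).exists
  calc ∑ n ∈ range N, ‖c n‖ * supNorm (φ n) K
      ≤ ∑ n ∈ range m, ‖c n‖ * supNorm (φ n) K :=
        sum_le_sum_of_subset_of_nonneg (range_subset_range.2 hNm) fun n _ _ =>
          mul_nonneg (norm_nonneg _) (supNorm_nonneg _ _)
    _ ≤ supNorm (fun z => ∑ n ∈ range m, c n * φ n z) K₁ :=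
        sum_le_supNorm_partialSum (fun n => differentiableOn_univ.mp (hbasis.1 n)) hBohr c m
    _ ≤ supNorm f G + ε := hm

/-- if `(φₙ)` is a basis of `H(ℂ^d)` with `φ₀ ≡ 1`, `K ⊆ K₁` are compact
sets realizing the Bohr inequality for entire functions, and `G ⊇ K₁` is a domain such
that `(φₙ)` is also a basis of `H(G)`, then every bounded analytic `f = ∑ fₙ φₙ` on `G`
satisfies `∑ |fₙ| |φₙ|_K ≤ sup_G |f|`. -/
theorem stmt10 (d : ℕ) (hd : 1 ≤ d) (φ : ℕ → Cd d → ℂ)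
    (hbasis : IsBasisOn φ (Set.univ : Set (Cd d)))
    (hφ0 : ∀ z : Cd d, φ 0 z = 1)
    (K K₁ : Set (Cd d)) (hK : IsCompact K) (hK₁ : IsCompact K₁) (hKK₁ : K ⊆ K₁)
    (hBohr : ∀ (h : Cd d → ℂ) (c : ℕ → ℂ), Differentiable ℂ h →
      ExpandsTo φ c h (Set.univ : Set (Cd d)) →
      ∀ N : ℕ, ∑ n ∈ Finset.range N, ‖c n‖ * supNorm (φ n) K ≤ supNorm h K₁)
    (G : Set (Cd d)) (hG : IsOpen G) (hGconn : IsConnected G) (hK₁G : K₁ ⊆ G)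
    (hbasisG : IsBasisOn φ G)
    (f : Cd d → ℂ) (c : ℕ → ℂ) (hf : DifferentiableOn ℂ f G)
    (hbd : ∃ M : ℝ, ∀ z ∈ G, ‖f z‖ ≤ M) (hexp : ExpandsTo φ c f G) :
    ∀ N : ℕ, ∑ n ∈ Finset.range N, ‖c n‖ * supNorm (φ n) K ≤ supNorm f G :=
  stmt10_general d φ hbasis K K₁ hK₁ hBohr G hK₁G f c hbd hexp
end

section
/- Let D ⊆ ℂ^d be a domain with the Liouville Property, let z₀ ∈ D, and let (Dₙ)_{n∈ℕ} be an exhaustion of D with z₀ ∈ D₁. Then for every z ∈ D, γₙ(z) → 0 as n → ∞ (γₙ(z) being defined for all n large enough that z ∈ Dₙ). -/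
/-!
Suppose `γₙ(z) ≥ ε` for infinitely many `n`, and pick witnesses `Fₙ`, holomorphic and bounded by
`1` on `Dₙ`, with `Fₙ(z₀) = 0` and `|Fₙ(z)| > ε/2`. Along any ultrafilter finer than `atTop` the
`Fₙ` converge pointwise on `D`. The Cauchy estimates (the Schwarz lemma in several variables) make
them locally equi-Lipschitz, so the convergence is locally uniform, and then so is the convergence
of their derivatives: the limit `f` is holomorphic on `D`. It is bounded by `1`, hence constant by
the Liouville property, although `f(z₀) = 0` and `|f(z)| ≥ ε/2`.
-/

open Filter Topology Metric

variable {E : Type*} [NormedAddCommGroup E] [NormedSpace ℂ E]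

open Set

lemma mapsTo_closedBall_two_mul_of_norm_le {X G : Type*} [SeminormedAddCommGroup G]
    {h : X → G} {s : Set X} {y : X} {M : ℝ}
    (hb : ∀ w ∈ s, ‖h w‖ ≤ M) (hy : y ∈ s) : MapsTo h s (closedBall (h y) (2 * M)) :=
  fun w hw => mem_closedBall.2 <| calc
    dist (h w) (h y) ≤ ‖h w‖ + ‖h y‖ := dist_le_norm_add_norm _ _
    _ ≤ 2 * M := by linarith [hb w hw, hb y hy]

theorem tendstoUniformlyOn_of_eventually_lipschitz {X Y ι : Type*} [PseudoMetricSpace X]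
    [PseudoMetricSpace Y] {l : Filter ι} [l.NeBot] {G : ι → X → Y} {g : X → Y} {K : Set X}
    (hK : IsCompact K) {C ρ : ℝ} (hC : 0 ≤ C) (hρ : 0 < ρ)
    (hlip : ∀ᶠ n in l, ∀ y ∈ K, ∀ y' ∈ K, dist y y' < ρ →
      dist (G n y) (G n y') ≤ C * dist y y')
    (hpt : ∀ y ∈ K, Tendsto (G · y) l (𝓝 (g y))) :
    TendstoUniformlyOn G g l K := by
  have hglip : ∀ y ∈ K, ∀ y' ∈ K, dist y y' < ρ → dist (g y) (g y') ≤ C * dist y y' :=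
    fun y hy y' hy' hyy' => le_of_tendsto ((hpt y hy).dist (hpt y' hy'))
      (hlip.mono fun n hn => hn y hy y' hy' hyy')
  rw [Metric.tendstoUniformlyOn_iff]
  intro ε hε
  set δ := min ρ (ε / (3 * (C + 1)))
  have hδ : 0 < δ := by positivity
  have hCδ : C * δ < ε / 3 := calc
    C * δ ≤ C * (ε / (3 * (C + 1))) := by gcongr; exact min_le_right _ _
    _ < (C + 1) * (ε / (3 * (C + 1))) := by gcongr; linarith
    _ = ε / 3 := by field_simp
  obtain ⟨t, htK, hcov⟩ := hK.elim_nhds_subcover (fun k => ball k δ) fun k _ => ball_mem_nhds k hδ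
  have hnet : ∀ᶠ n in l, ∀ k ∈ t, dist (g k) (G n k) < ε / 3 :=
    (t.eventually_all).2 fun k hk =>
      (Metric.tendsto_nhds.1 (hpt k (htK k hk)) (ε / 3) (by positivity)).mono fun n hn => by
        rwa [dist_comm]
  filter_upwards [hlip, hnet] with n hn hnk y hy
  obtain ⟨k, hkt, hyk⟩ := mem_iUnion₂.1 (hcov hy)
  have hyk' : dist y k < δ := mem_ball.1 hyk
  have hykρ : dist y k < ρ := hyk'.trans_le (min_le_left _ _)
  have hCyk : C * dist y k < ε / 3 := (by gcongr : C * dist y k ≤ C * δ).trans_lt hCδ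
  calc dist (g y) (G n y)
      ≤ dist (g y) (g k) + dist (g k) (G n k) + dist (G n k) (G n y) := dist_triangle4 _ _ _ _
    _ ≤ C * dist y k + dist (g k) (G n k) + C * dist y k := by
      gcongr
      · exact hglip y hy k (htK k hkt) hykρ
      · rw [dist_comm y]
        exact hn k (htK k hkt) y hy (by rwa [dist_comm])
    _ < ε := by linarith [hnk k hkt]

lemma tendsto_limUnder_of_eventually_norm_le {ι G : Type*} [NormedAddCommGroup G] [ProperSpace G]
    {𝒰 : Ultrafilter ι} {u : ι → G} {M : ℝ} (h : ∀ᶠ n in 𝒰, ‖u n‖ ≤ M) :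
    Tendsto u 𝒰 (𝓝 (limUnder (𝒰 : Filter ι) u)) := by
  obtain ⟨a, -, ha⟩ := (isCompact_closedBall (0 : G) M).ultrafilter_le_nhds (𝒰.map u)
    (le_principal_iff.2 (h.mono fun n hn => mem_closedBall_zero_iff.2 hn))
  exact tendsto_nhds_limUnder ⟨a, ha⟩

section HolomorphicLimits

variable {G : Type*} [NormedAddCommGroup G] [NormedSpace ℂ G] {ι : Type*}

lemma norm_fderiv_le_of_norm_le_on_ball {h : E → G} {y : E} {ρ M : ℝ} (hρ : 0 < ρ)
    (hd : DifferentiableOn ℂ h (ball y ρ)) (hb : ∀ w ∈ ball y ρ, ‖h w‖ ≤ M) :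
    ‖fderiv ℂ h y‖ ≤ 2 * M / ρ :=
  Complex.norm_fderiv_le_div_of_mapsTo_ball hd
    (mapsTo_closedBall_two_mul_of_norm_le hb (mem_ball_self hρ)) hρ

lemma dist_le_of_norm_le_on_ball {h : E → G} {y y' : E} {ρ M : ℝ}
    (hd : DifferentiableOn ℂ h (ball y ρ)) (hb : ∀ w ∈ ball y ρ, ‖h w‖ ≤ M)
    (hy' : dist y' y < ρ) :
    dist (h y') (h y) ≤ 2 * M / ρ * dist y' y :=
  Complex.dist_le_div_mul_dist_of_mapsTo_ball hd
    (mapsTo_closedBall_two_mul_of_norm_le hb (mem_ball_self ((dist_nonneg).trans_lt hy')))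
    (mem_ball.2 hy')

theorem differentiableAt_of_tendstoUniformlyOn_ball [CompleteSpace G] {l : Filter ι} [l.NeBot]
    {F : ι → E → G} {f : E → G} {x : E} {r : ℝ} (hr : 0 < r)
    (hFd : ∀ᶠ n in l, DifferentiableOn ℂ (F n) (ball x r))
    (hF : TendstoUniformlyOn F f l (ball x r)) :
    DifferentiableAt ℂ f x := by
  have hsub : ∀ y ∈ ball x (r / 2), ball y (r / 2) ⊆ ball x r := fun y hy =>
    ball_subset_ball' (by linarith [mem_ball.1 hy])
  have hr2 : 0 < r / 2 := half_pos hr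
  -- Cauchy estimates turn uniform closeness of `F m, F n` into that of their derivatives.
  have hderiv : UniformCauchySeqOn (fun n => fderiv ℂ (F n)) l (ball x (r / 2)) := by
    intro u hu
    obtain ⟨η, hη, hηu⟩ := Metric.mem_uniformity_dist.1 hu
    have hη' : 0 < η * r / 8 := by positivity
    filter_upwards [hF.uniformCauchySeqOn _ (Metric.dist_mem_uniformity hη'),
      hFd.prod_mk hFd] with p hp hpd y hy
    have hdiff : DifferentiableOn ℂ (F p.1 - F p.2) (ball y (r / 2)) :=
      (hpd.1.sub hpd.2).mono (hsub y hy)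
    have hbound : ∀ w ∈ ball y (r / 2), ‖(F p.1 - F p.2) w‖ ≤ η * r / 8 := fun w hw =>
      (by simpa [dist_eq_norm] using (hp w (hsub y hy hw)).le)
    have hy' : ball x r ∈ 𝓝 y := isOpen_ball.mem_nhds (hsub y hy (mem_ball_self hr2))
    apply hηu
    rw [dist_eq_norm, ← fderiv_sub (hpd.1.differentiableAt hy') (hpd.2.differentiableAt hy')]
    calc ‖fderiv ℂ (F p.1 - F p.2) y‖ ≤ 2 * (η * r / 8) / (r / 2) :=
          norm_fderiv_le_of_norm_le_on_ball hr2 hdiff hbound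
      _ < η := by field_simp; linarith
  have hlim : ∀ y ∈ ball x (r / 2), ∃ L, Tendsto (fun n => fderiv ℂ (F n) y) l (𝓝 L) :=
    fun y hy => CompleteSpace.complete (hderiv.cauchy_map hy)
  have hderiv_lim : TendstoUniformlyOn (fun n => fderiv ℂ (F n))
      (fun y => limUnder l fun n => fderiv ℂ (F n) y) l (ball x (r / 2)) :=
    hderiv.tendstoUniformlyOn_of_tendsto fun y hy => tendsto_nhds_limUnder (hlim y hy)
  have hderiv_nhds : TendstoUniformlyOnFilter (fun n => fderiv ℂ (F n))
      (fun y => limUnder l fun n => fderiv ℂ (F n) y) l (𝓝 x) :=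
    (tendstoUniformlyOn_iff_tendstoUniformlyOnFilter.1 hderiv_lim).mono_right
      (le_principal_iff.2 (ball_mem_nhds x hr2))
  refine (hasFDerivAt_of_tendstoUniformlyOnFilter (f := F) hderiv_nhds ?_ ?_).differentiableAt
  · filter_upwards [hFd.prod_mk (ball_mem_nhds x hr)] with p hp
    exact (hp.1.differentiableAt (isOpen_ball.mem_nhds hp.2)).hasFDerivAt
  · filter_upwards [ball_mem_nhds x hr] with y hy
    exact hF.tendsto_at hy

theorem differentiableAt_limUnder_of_eventually_norm_le [ProperSpace E] [ProperSpace G]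
    {𝒰 : Ultrafilter ι} {F : ι → E → G} {x : E} {r M : ℝ} (hr : 0 < r)
    (hFd : ∀ᶠ n in 𝒰, DifferentiableOn ℂ (F n) (ball x r))
    (hFb : ∀ᶠ n in 𝒰, ∀ w ∈ ball x r, ‖F n w‖ ≤ M) :
    DifferentiableAt ℂ (fun w => limUnder (𝒰 : Filter ι) (F · w)) x := by
  have hM : 0 ≤ M := by
    obtain ⟨n, hn⟩ := hFb.exists
    exact (norm_nonneg _).trans (hn x (mem_ball_self hr))
  have hr2 : 0 < r / 2 := half_pos hr
  have hsub : ∀ y ∈ closedBall x (r / 2), ball y (r / 2) ⊆ ball x r := fun y hy =>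
    ball_subset_ball' (by linarith [mem_closedBall.1 hy])
  have hunif : TendstoUniformlyOn F (fun w => limUnder (𝒰 : Filter ι) (F · w)) 𝒰
      (closedBall x (r / 2)) := by
    refine tendstoUniformlyOn_of_eventually_lipschitz (isCompact_closedBall x (r / 2))
      (C := 2 * M / (r / 2)) (by positivity) hr2 ?_ fun y hy =>
        tendsto_limUnder_of_eventually_norm_le
          (hFb.mono fun n hn => hn y (hsub y hy (mem_ball_self hr2)))
    filter_upwards [hFd, hFb] with n hnd hnb y _ y' hy' hyy'
    exact dist_le_of_norm_le_on_ball (hnd.mono (hsub y' hy'))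
      (fun w hw => hnb w (hsub y' hy' hw)) hyy'
  exact differentiableAt_of_tendstoUniformlyOn_ball hr2
    (hFd.mono fun n hn => hn.mono (ball_subset_ball (by linarith)))
    (hunif.mono ball_subset_closedBall)

theorem differentiableOn_iUnion_limUnder [ProperSpace E] [ProperSpace G] {Dn : ℕ → Set E}
    (hopen : ∀ n, IsOpen (Dn n)) (hmono : Monotone Dn) {F : ℕ → E → G} {M : ℝ}
    (hFd : ∀ n, DifferentiableOn ℂ (F n) (Dn n)) (hFb : ∀ n, ∀ w ∈ Dn n, ‖F n w‖ ≤ M)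
    {𝒰 : Ultrafilter ℕ} (h𝒰 : (𝒰 : Filter ℕ) ≤ atTop) :
    DifferentiableOn ℂ (fun w => limUnder (𝒰 : Filter ℕ) (F · w)) (⋃ n, Dn n) := by
  intro x hx
  obtain ⟨m, hm⟩ := mem_iUnion.1 hx
  obtain ⟨r, hr, hrm⟩ := Metric.isOpen_iff.1 (hopen m) x hm
  have hev : ∀ᶠ n in 𝒰, ball x r ⊆ Dn n :=
    (eventually_ge_atTop m).filter_mono h𝒰 |>.mono fun n hn => hrm.trans (hmono hn)
  exact (differentiableAt_limUnder_of_eventually_norm_le hr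
    (hev.mono fun n hn => (hFd n).mono hn)
    (hev.mono fun n hn w hw => hFb n w (hn hw))).differentiableWithinAt

end HolomorphicLimits

theorem LiouvilleProperty.tendsto_zero_of_apply_eq_zero [ProperSpace E] {Dn : ℕ → Set E}
    (hL : LiouvilleProperty (⋃ n, Dn n)) (hopen : ∀ n, IsOpen (Dn n)) (hmono : Monotone Dn)
    {F : ℕ → E → ℂ} {M : ℝ} (hFd : ∀ n, DifferentiableOn ℂ (F n) (Dn n))
    (hFb : ∀ n, ∀ w ∈ Dn n, ‖F n w‖ ≤ M) {z₀ z : E} (hz₀ : z₀ ∈ ⋃ n, Dn n)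
    (hF0 : ∀ n, F n z₀ = 0) (hz : z ∈ ⋃ n, Dn n) :
    Tendsto (fun n => F n z) atTop (𝓝 0) := by
  rw [tendsto_iff_ultrafilter]
  intro 𝒰 h𝒰
  set f : E → ℂ := fun w => limUnder (𝒰 : Filter ℕ) (F · w)
  have hbound : ∀ w ∈ ⋃ n, Dn n, ∀ᶠ n in 𝒰, ‖F n w‖ ≤ M := fun w hw => by
    obtain ⟨m, hm⟩ := mem_iUnion.1 hw
    exact (eventually_ge_atTop m).filter_mono h𝒰 |>.mono fun n hn => hFb n w (hmono hn hm)
  have hlim : ∀ w ∈ ⋃ n, Dn n, Tendsto (F · w) 𝒰 (𝓝 (f w)) := fun w hw =>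
    tendsto_limUnder_of_eventually_norm_le (hbound w hw)
  have hf_bdd : ∀ w ∈ ⋃ n, Dn n, ‖f w‖ ≤ M := fun w hw =>
    le_of_tendsto (hlim w hw).norm (hbound w hw)
  have hf_const : f z = f z₀ :=
    hL f (differentiableOn_iUnion_limUnder hopen hmono hFd hFb h𝒰) ⟨M, hf_bdd⟩ z hz z₀ hz₀
  have hf0 : f z₀ = 0 :=
    tendsto_nhds_unique (hlim z₀ hz₀) (by simpa only [hF0] using tendsto_const_nhds)
  simpa only [hf_const, hf0] using hlim z hz

lemma IsExhaustion.monotone {X : Type*} [NormedAddCommGroup X] {Dn : ℕ → Set X} {D : Set X}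
    (h : IsExhaustion Dn D) : Monotone Dn :=
  monotone_nat_of_le_succ fun n => subset_closure.trans (h.2.2.1 n)

lemma exists_lt_norm_of_lt_gammaFn {U : Set E} {z₀ z : E} {t : ℝ} (ht : t < gammaFn U z₀ z) :
    ∃ f : E → ℂ, DifferentiableOn ℂ f U ∧ f z₀ = 0 ∧ (∀ w ∈ U, ‖f w‖ ≤ 1) ∧ t < ‖f z‖ := by
  obtain ⟨_, ⟨f, hfd, hf0, hfb, rfl⟩, hlt⟩ := exists_lt_of_lt_csSup
    (by exact ⟨0, fun _ => 0, differentiableOn_const 0, rfl, fun _ _ => by simp, by simp⟩) ht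
  exact ⟨f, hfd, hf0, hfb, hlt⟩

theorem stmt11_general (d : ℕ) (D : Set (Cd d))
    (hL : LiouvilleProperty D) (z₀ : Cd d) (hz₀ : z₀ ∈ D)
    (Dn : ℕ → Set (Cd d)) (hex : IsExhaustion Dn D) :
    ∀ z ∈ D, ∀ ε : ℝ, 0 < ε → ∃ N : ℕ, ∀ n : ℕ, N ≤ n →
      z ∈ Dn n ∧ gammaFn (Dn n) z₀ z < ε := by
  have hmono := hex.monotone
  obtain ⟨hopen, -, -, rfl⟩ := hex
  intro z hz ε hε
  obtain ⟨m, hm⟩ := mem_iUnion.1 hz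
  have hz_mem : ∀ᶠ n in atTop, z ∈ Dn n := eventually_atTop.2 ⟨m, fun n hn => hmono hn hm⟩
  suffices hγ : ∀ᶠ n in atTop, gammaFn (Dn n) z₀ z < ε from eventually_atTop.1 (hz_mem.and hγ)
  by_contra hγ
  have hF : ∀ N, ∃ F : Cd d → ℂ, DifferentiableOn ℂ F (Dn N) ∧ F z₀ = 0 ∧
      (∀ w ∈ Dn N, ‖F w‖ ≤ 1) ∧ ε / 2 < ‖F z‖ := fun N => by
    obtain ⟨n, hNn, hn⟩ := frequently_atTop.1 (not_eventually.1 hγ) N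
    obtain ⟨F, hFd, hF0, hFb, hFz⟩ :=
      exists_lt_norm_of_lt_gammaFn ((half_lt_self hε).trans_le (not_lt.1 hn))
    exact ⟨F, hFd.mono (hmono hNn), hF0, fun w hw => hFb w (hmono hNn hw), hFz⟩
  choose F hFd hF0 hFb hFz using hF
  have hFz_lim := hL.tendsto_zero_of_apply_eq_zero hopen hmono hFd hFb hz₀ hF0 hz
  obtain ⟨n, hn⟩ := (hFz_lim.norm.eventually
    (Iio_mem_nhds (by simpa using half_pos hε : ‖(0 : ℂ)‖ < ε / 2))).exists
  exact (hFz n).not_gt hn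

/-- if `D ⊆ ℂ^d` is a domain with the Liouville Property, `z₀ ∈ D`, and
`(Dₙ)` is an exhaustion of `D` with `z₀ ∈ D₁`, then `γₙ(z) → 0` for every `z ∈ D`
(with `γₙ(z)` defined as soon as `z ∈ Dₙ`). -/
theorem stmt11 (d : ℕ) (D : Set (Cd d)) (hD : IsOpen D) (hDconn : IsConnected D)
    (hL : LiouvilleProperty D) (z₀ : Cd d) (hz₀ : z₀ ∈ D)
    (Dn : ℕ → Set (Cd d)) (hex : IsExhaustion Dn D) (hz₀1 : z₀ ∈ Dn 0) :
    ∀ z ∈ D, ∀ ε : ℝ, 0 < ε → ∃ N : ℕ, ∀ n : ℕ, N ≤ n →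
      z ∈ Dn n ∧ gammaFn (Dn n) z₀ z < ε :=
  stmt11_general d D hL z₀ hz₀ Dn hex
end

section
/- Let U ⊆ ℂ^d be a nonempty open set with compact closure and let z₀ ∈ U. Then the function γ : U → ℝ defined by γ(z) = sup{|f(z)| : f analytic on U, f(z₀) = 0, sup_U |f| ≤ 1} is continuous on U. -/
open Filter Topology Metric

variable {E : Type*} [NormedAddCommGroup E] [NormedSpace ℂ E]

/-! The Schwarz lemma makes every member of the family `2 / r`-Lipschitz at the centre of a ball
of radius `r` in `U`; a supremum of such functions is again `2 / r`-Lipschitz there. -/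

theorem dist_le_two_mul_div_mul_dist_of_forall_norm_le {F : Type*} [NormedAddCommGroup F]
    [NormedSpace ℂ F] {f : E → F} {z w : E} {r M : ℝ} (hf : DifferentiableOn ℂ f (ball z r))
    (hM : ∀ y ∈ ball z r, ‖f y‖ ≤ M) (hw : w ∈ ball z r) :
    dist (f w) (f z) ≤ 2 * M / r * dist w z := by
  refine Complex.dist_le_div_mul_dist_of_mapsTo_ball hf (fun y hy => ?_) hw
  rw [mem_closedBall, dist_eq_norm]
  linarith [norm_sub_le (f y) (f z), hM y hy, hM z (mem_ball_self (pos_of_mem_ball hw))]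

section gammaFn

variable {U : Set E} {z₀ z w : E}

theorem norm_le_gammaFn {f : E → ℂ} (hz : z ∈ U) (hf : DifferentiableOn ℂ f U) (h₀ : f z₀ = 0)
    (hb : ∀ y ∈ U, ‖f y‖ ≤ 1) : ‖f z‖ ≤ gammaFn U z₀ z :=
  le_csSup ⟨1, by rintro _ ⟨g, -, -, hg, rfl⟩; exact hg z hz⟩ ⟨f, hf, h₀, hb, rfl⟩

theorem gammaFn_le_add_of_forall {C : ℝ} (hz : z ∈ U)
    (h : ∀ f : E → ℂ, DifferentiableOn ℂ f U → f z₀ = 0 → (∀ y ∈ U, ‖f y‖ ≤ 1) →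
      ‖f w - f z‖ ≤ C) :
    gammaFn U z₀ w ≤ gammaFn U z₀ z + C := by
  refine csSup_le ⟨0, fun _ => 0, differentiableOn_const 0, rfl, by simp, by simp⟩ ?_
  rintro _ ⟨f, hf, h₀, hb, rfl⟩
  calc ‖f w‖ ≤ ‖f z‖ + ‖f w - f z‖ := norm_le_norm_add_norm_sub' (f w) (f z)
    _ ≤ gammaFn U z₀ z + C := add_le_add (norm_le_gammaFn hz hf h₀ hb) (h f hf h₀ hb)

theorem dist_gammaFn_le {r : ℝ} (hU : ball z r ⊆ U) (hw : w ∈ ball z r) :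
    dist (gammaFn U z₀ w) (gammaFn U z₀ z) ≤ 2 / r * dist w z := by
  have hzU : z ∈ U := hU (mem_ball_self (pos_of_mem_ball hw))
  have hf_lip : ∀ f : E → ℂ, DifferentiableOn ℂ f U → (∀ y ∈ U, ‖f y‖ ≤ 1) →
      ‖f w - f z‖ ≤ 2 / r * dist w z := fun f hf hb => by
    simpa [dist_eq_norm] using
      dist_le_two_mul_div_mul_dist_of_forall_norm_le (hf.mono hU) (fun y hy => hb y (hU hy)) hw
  rw [Real.dist_eq, abs_sub_le_iff]
  constructor
  · linarith [gammaFn_le_add_of_forall (z₀ := z₀) (w := w) hzU fun f hf _ hb => hf_lip f hf hb]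
  · linarith [gammaFn_le_add_of_forall (z₀ := z₀) (w := z) (hU hw) fun f hf _ hb =>
      norm_sub_rev (f z) (f w) ▸ hf_lip f hf hb]

theorem continuousOn_gammaFn (hU : IsOpen U) : ContinuousOn (gammaFn U z₀) U := by
  intro z hz
  obtain ⟨r, hr, hball⟩ := Metric.isOpen_iff.mp hU z hz
  exact (continuousAt_of_locally_lipschitz hr _ fun w hw =>
    dist_gammaFn_le hball (mem_ball.mpr hw)).continuousWithinAt

end gammaFn

theorem stmt14_general (d : ℕ) (U : Set (Cd d)) (hU : IsOpen U) (z₀ : Cd d) :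
    ContinuousOn (gammaFn U z₀) U :=
  continuousOn_gammaFn hU

/-- for a nonempty open `U ⊆ ℂ^d` with compact closure and `z₀ ∈ U`, the
function `γ(z) = sup {|f z| : f analytic on U, f z₀ = 0, sup_U |f| ≤ 1}` is continuous
on `U`. -/
theorem stmt14 (d : ℕ) (U : Set (Cd d)) (hU : IsOpen U) (hne : U.Nonempty)
    (hUc : IsCompact (closure U)) (z₀ : Cd d) (hz₀ : z₀ ∈ U) :
    ContinuousOn (gammaFn U z₀) U :=
  stmt14_general d U hU z₀
end

section
/- Let D ⊆ ℂ^d be a domain with the Liouville Property. Then for every z₀ ∈ D, every compact K ⊆ D with z₀ ∈ K, and every ε > 0 there exists a compact K₁ ⊆ D such that sup_K |f − f(z₀)| ≤ ε · sup_{K₁} Re(f(z) − f(z₀)) for every function f analytic on some open neighborhood of K₁. -/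
open Filter Topology Metric

variable {E : Type*} [NormedAddCommGroup E] [NormedSpace ℂ E]

/-!
Write `g = f - f z₀`. The core is a Schwarz-type bound: for `δ > 0` there is a compact
`K₁ ⊆ D` such that every `h` holomorphic near `K₁` with `h z₀ = 0` and `‖h‖ ≤ 1` on `K₁`
satisfies `‖h‖ ≤ δ` on `K`. Otherwise, indexing counterexamples by the compact subsets of `D`
and passing to a limit along an ultrafilter (the Cauchy estimates make the limit holomorphic and
the convergence continuous), we get a holomorphic function on `D`, bounded by `1`, vanishing at
`z₀` and of norm at least `δ` somewhere on `K`, contradicting the Liouville property.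
For `a > sup_{K₁} Re g` the map `h = g / (2a - g)` sends `K₁` into the unit disc, so the bound
gives `‖g‖ ≤ δ (2a + ‖g‖)` on `K`, which is `‖g‖ ≤ ε a` for `δ = ε / (2 + ε)`.
-/

lemma mapsTo_closedBall_two_mul_of_norm_le_s15 {X G : Type*} [PseudoMetricSpace X]
    [SeminormedAddCommGroup G] {f : X → G} {c : X} {R M : ℝ}
    (hf : ∀ w ∈ ball c R, ‖f w‖ ≤ M) :
    Set.MapsTo f (ball c R) (closedBall (f c) (2 * M)) := by
  intro w hw
  rw [mem_closedBall, dist_eq_norm]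
  linarith [norm_sub_le (f w) (f c), hf w hw, hf c (mem_ball_self (pos_of_mem_ball hw))]

section CauchyEstimates

variable {G : Type*} [NormedAddCommGroup G] [NormedSpace ℂ G] {f : E → G} {c z : E} {R M : ℝ}

lemma DifferentiableOn.norm_sub_le_of_norm_le (hd : DifferentiableOn ℂ f (ball c R))
    (hf : ∀ w ∈ ball c R, ‖f w‖ ≤ M) (hz : z ∈ ball c R) :
    ‖f z - f c‖ ≤ 2 * M / R * ‖z - c‖ := by
  simpa only [dist_eq_norm] using
    Complex.dist_le_div_mul_dist_of_mapsTo_ball hd (mapsTo_closedBall_two_mul_of_norm_le_s15 hf) hz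

lemma DifferentiableOn.norm_fderiv_le_of_norm_le (hd : DifferentiableOn ℂ f (ball c R))
    (hf : ∀ w ∈ ball c R, ‖f w‖ ≤ M) (hR : 0 < R) :
    ‖fderiv ℂ f c‖ ≤ 2 * M / R :=
  Complex.norm_fderiv_le_div_of_mapsTo_ball hd (mapsTo_closedBall_two_mul_of_norm_le_s15 hf) hR

lemma DifferentiableOn.norm_sub_sub_fderiv_le_of_norm_le (hd : DifferentiableOn ℂ f (ball c R))
    (hf : ∀ w ∈ ball c R, ‖f w‖ ≤ M) (hz : z ∈ ball c R) :
    ‖f z - f c - fderiv ℂ f c (z - c)‖ ≤ 4 * M / R ^ 2 * ‖z - c‖ ^ 2 := by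
  have hR : 0 < R := pos_of_mem_ball hz
  set L := fderiv ℂ f c
  set h : E → G := fun w => f w - L (w - c)
  have hsub : ∀ w, h w - h c = f w - f c - L (w - c) := fun w => by
    simp only [h, sub_self, map_zero, sub_zero]; abel
  have hmaps : Set.MapsTo h (ball c R) (closedBall (h c) (4 * M)) := by
    intro w hw
    have hw' : ‖w - c‖ < R := mem_ball_iff_norm.1 hw
    have hL : ‖L (w - c)‖ ≤ 2 * M := calc
      ‖L (w - c)‖ ≤ ‖L‖ * ‖w - c‖ := L.le_opNorm _
      _ ≤ 2 * M / R * R := by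
        gcongr
        · exact (norm_nonneg _).trans (hd.norm_fderiv_le_of_norm_le hf hR)
        · exact hd.norm_fderiv_le_of_norm_le hf hR
      _ = 2 * M := by field_simp
    have hfw : ‖f w - f c‖ ≤ 2 * M := by
      simpa only [mem_closedBall, dist_eq_norm] using mapsTo_closedBall_two_mul_of_norm_le_s15 hf hw
    rw [mem_closedBall, dist_eq_norm, hsub]
    linarith [norm_sub_le (f w - f c) (L (w - c))]
  have hlittle : (h · - h c) =o[𝓝 c] (fun w => ‖w - c‖ ^ 1) := by
    simpa only [hsub, pow_one, Asymptotics.isLittleO_norm_right] using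
      (hd.differentiableAt (ball_mem_nhds c hR)).hasFDerivAt.isLittleO
  have hhd : DifferentiableOn ℂ h (ball c R) := hd.sub (by fun_prop)
  have := Complex.dist_le_mul_div_pow_of_mapsTo_ball_of_isLittleO hhd hmaps hlittle hz
  rw [dist_eq_norm, hsub, dist_eq_norm] at this
  convert this using 1
  ring

end CauchyEstimates

lemma Ultrafilter.exists_tendsto_of_eventually_mem {ι X : Type*} [TopologicalSpace X]
    {l : Ultrafilter ι} {u : ι → X} {s : Set X} (hs : IsCompact s) (hu : ∀ᶠ i in l, u i ∈ s) :
    ∃ x ∈ s, Tendsto u l (𝓝 x) :=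
  hs.ultrafilter_le_nhds (l.map u) (le_principal_iff.2 hu)

section NormalFamilies

variable {G : Type*} [NormedAddCommGroup G] [NormedSpace ℂ G] {ι : Type*} {g : ι → E → G}
  {F : E → G} {x : E} {R M : ℝ}

lemma tendsto_apply_of_eventually_norm_le {l : Filter ι} {z : ι → E} (hR : 0 < R)
    (hg : ∀ᶠ i in l, DifferentiableOn ℂ (g i) (ball x R) ∧ ∀ w ∈ ball x R, ‖g i w‖ ≤ M)
    {y : G} (hy : Tendsto (g · x) l (𝓝 y)) (hz : Tendsto z l (𝓝 x)) :
    Tendsto (fun i => g i (z i)) l (𝓝 y) := by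
  have hsmall : Tendsto (fun i => g i (z i) - g i x) l (𝓝 0) := by
    refine squeeze_zero_norm' ?_ (by simpa using ((hz.sub_const x).norm.const_mul (2 * M / R)))
    filter_upwards [hg, hz (ball_mem_nhds x hR)] with i hi hzi
    exact hi.1.norm_sub_le_of_norm_le hi.2 hzi
  simpa using hsmall.add hy

lemma Ultrafilter.differentiableAt_of_tendsto [FiniteDimensional ℂ E] [FiniteDimensional ℂ G]
    {l : Ultrafilter ι} (hR : 0 < R)
    (hg : ∀ᶠ i in l, DifferentiableOn ℂ (g i) (ball x R) ∧ ∀ w ∈ ball x R, ‖g i w‖ ≤ M)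
    (hF : ∀ w ∈ ball x R, Tendsto (g · w) l (𝓝 (F w))) :
    DifferentiableAt ℂ F x := by
  obtain ⟨A, -, hA⟩ := l.exists_tendsto_of_eventually_mem
    (isCompact_closedBall (0 : E →L[ℂ] G) (2 * M / R))
    (hg.mono fun i hi => mem_closedBall_zero_iff.2 (hi.1.norm_fderiv_le_of_norm_le hi.2 hR))
  have hquad : ∀ w ∈ ball x R, ‖F w - F x - A (w - x)‖ ≤ 4 * M / R ^ 2 * ‖w - x‖ ^ 2 := by
    intro w hw
    have hAw : Tendsto (fun i => fderiv ℂ (g i) x (w - x)) l (𝓝 (A (w - x))) :=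
      ((ContinuousLinearMap.apply ℂ G (w - x)).continuous.tendsto A).comp hA
    refine le_of_tendsto (((hF w hw).sub (hF x (mem_ball_self hR))).sub hAw).norm ?_
    filter_upwards [hg] with i hi
    exact hi.1.norm_sub_sub_fderiv_le_of_norm_le hi.2 hw
  have hbig : (fun w => F w - F x - A (w - x)) =O[𝓝 x] fun w => ‖w - x‖ ^ 2 := by
    refine Asymptotics.IsBigO.of_bound (4 * M / R ^ 2) ?_
    filter_upwards [ball_mem_nhds x hR] with w hw
    simpa using hquad w hw
  exact (HasFDerivAt.of_isLittleO
    (hbig.trans_isLittleO (Asymptotics.isLittleO_pow_sub_sub x one_lt_two))).differentiableAt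

theorem Ultrafilter.exists_differentiableOn_tendsto [FiniteDimensional ℂ E]
    [FiniteDimensional ℂ G] (l : Ultrafilter ι) {D : Set E} (hD : IsOpen D)
    (hg : ∀ C, IsCompact C → C ⊆ D →
      ∀ᶠ i in l, DifferentiableOn ℂ (g i) C ∧ ∀ w ∈ C, ‖g i w‖ ≤ M) :
    ∃ F : E → G, DifferentiableOn ℂ F D ∧
      ∀ x ∈ D, ∀ z : ι → E, Tendsto z l (𝓝 x) → Tendsto (fun i => g i (z i)) l (𝓝 (F x)) := by
  have hball : ∀ x ∈ D, ∃ R > 0, ball x R ⊆ D ∧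
      ∀ᶠ i in l, DifferentiableOn ℂ (g i) (ball x R) ∧ ∀ w ∈ ball x R, ‖g i w‖ ≤ M := by
    intro x hx
    obtain ⟨R, hR, hRD⟩ := nhds_basis_closedBall.mem_iff.1 (hD.mem_nhds hx)
    refine ⟨R, hR, ball_subset_closedBall.trans hRD, ?_⟩
    filter_upwards [hg _ (isCompact_closedBall x R) hRD] with i hi
    exact ⟨hi.1.mono ball_subset_closedBall, fun w hw => hi.2 w (ball_subset_closedBall hw)⟩
  have hlim : ∀ x ∈ D, Tendsto (g · x) l (𝓝 (limUnder l (g · x))) := by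
    intro x hx
    obtain ⟨y, -, hy⟩ := l.exists_tendsto_of_eventually_mem (isCompact_closedBall (0 : G) M)
      ((hg {x} isCompact_singleton (Set.singleton_subset_iff.2 hx)).mono fun i hi =>
        mem_closedBall_zero_iff.2 (hi.2 x rfl))
    exact tendsto_nhds_limUnder ⟨y, hy⟩
  refine ⟨fun x => limUnder l (g · x), fun x hx => ?_, fun x hx z hz => ?_⟩ <;>
    obtain ⟨R, hR, hRD, hRg⟩ := hball x hx
  · exact (l.differentiableAt_of_tendsto hR hRg fun w hw => hlim w (hRD hw)).differentiableWithinAt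
  · exact tendsto_apply_of_eventually_norm_le hR hRg (hlim x hx) hz

end NormalFamilies

def SchwarzBound (z₀ : E) (K K₁ : Set E) (δ : ℝ) : Prop :=
  ∀ (U : Set E) (h : E → ℂ), IsOpen U → K₁ ⊆ U → DifferentiableOn ℂ h U → h z₀ = 0 →
    (∀ w ∈ K₁, ‖h w‖ ≤ 1) → ∀ z ∈ K, ‖h z‖ ≤ δ

theorem LiouvilleProperty.exists_schwarzBound [FiniteDimensional ℂ E] {D : Set E}
    (hL : LiouvilleProperty D) (hD : IsOpen D) {z₀ : E} {K : Set E} (hK : IsCompact K)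
    (hKD : K ⊆ D) (hz₀ : z₀ ∈ K) {δ : ℝ} (hδ : 0 < δ) :
    ∃ K₁, IsCompact K₁ ∧ K₁ ⊆ D ∧ K ⊆ K₁ ∧ SchwarzBound z₀ K K₁ δ := by
  by_contra! hcon
  let ι := {C : Set E // IsCompact C ∧ C ⊆ D}
  have hbad : ∀ C : ι, ∃ U, ∃ g : E → ℂ, IsOpen U ∧ K ∪ C.1 ⊆ U ∧ DifferentiableOn ℂ g U ∧
      g z₀ = 0 ∧ (∀ w ∈ K ∪ C.1, ‖g w‖ ≤ 1) ∧ ∃ z ∈ K, δ < ‖g z‖ := fun C => by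
    simpa only [SchwarzBound, not_forall, not_le, exists_prop] using
      hcon (K ∪ C.1) (hK.union C.2.1) (Set.union_subset hKD C.2.2) Set.subset_union_left
  choose U g hU hCU hg hg₀ hgb z hzK hgz using hbad
  have : (atTop : Filter ι).NeBot := atTop_neBot_iff.2
    ⟨⟨⟨∅, isCompact_empty, Set.empty_subset _⟩⟩, ⟨fun C C' =>
      ⟨⟨C.1 ∪ C'.1, C.2.1.union C'.2.1, Set.union_subset C.2.2 C'.2.2⟩,
        Set.subset_union_left, Set.subset_union_right⟩⟩⟩
  set l := Ultrafilter.of (atTop : Filter ι)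
  have hev : ∀ C, IsCompact C → C ⊆ D → ∀ᶠ i : ι in l, C ⊆ K ∪ i.1 := fun C hC hCD =>
    Ultrafilter.of_le _ ((eventually_ge_atTop (⟨C, hC, hCD⟩ : ι)).mono fun i (hi : C ⊆ i.1) =>
      hi.trans Set.subset_union_right)
  obtain ⟨F, hFd, hF⟩ := l.exists_differentiableOn_tendsto hD (g := g) (M := 1)
    fun C hC hCD => (hev C hC hCD).mono fun i hi =>
      ⟨(hg i).mono (hi.trans (hCU i)), fun w hw => hgb i w (hi hw)⟩
  obtain ⟨zs, hzsK, hzs⟩ := l.exists_tendsto_of_eventually_mem hK (Eventually.of_forall hzK)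
  have hFzs : δ ≤ ‖F zs‖ :=
    ge_of_tendsto (hF zs (hKD hzsK) z hzs).norm (Eventually.of_forall fun i => (hgz i).le)
  have hFz₀ : F z₀ = 0 :=
    tendsto_nhds_unique (hF z₀ (hKD hz₀) _ tendsto_const_nhds) (by simp [hg₀])
  have hFb : ∀ y ∈ D, ‖F y‖ ≤ 1 := fun y hy =>
    le_of_tendsto (hF y hy _ tendsto_const_nhds).norm
      ((hev {y} isCompact_singleton (Set.singleton_subset_iff.2 hy)).mono fun i hi =>
        hgb i y (hi rfl))
  rw [hL F hFd ⟨1, hFb⟩ zs (hKD hzsK) z₀ (hKD hz₀), hFz₀, norm_zero] at hFzs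
  exact hδ.not_ge hFzs

lemma Complex.norm_le_norm_two_mul_sub_of_re_le {w : ℂ} {a : ℝ} (ha : 0 ≤ a) (hw : w.re ≤ a) :
    ‖w‖ ≤ ‖(2 * a : ℂ) - w‖ := by
  rw [← sq_le_sq₀ (norm_nonneg _) (norm_nonneg _), Complex.sq_norm, Complex.sq_norm,
    Complex.normSq_apply, Complex.normSq_apply]
  have hre : ((2 * a : ℂ) - w).re = 2 * a - w.re := by simp
  have him : ((2 * a : ℂ) - w).im = -w.im := by simp
  rw [hre, him]
  nlinarith

theorem SchwarzBound.mul_norm_le_of_re_le {z₀ : E} {K K₁ U : Set E} {δ a : ℝ} {g : E → ℂ}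
    (hS : SchwarzBound z₀ K K₁ δ) (hKK₁ : K ⊆ K₁) (hU : IsOpen U) (hK₁U : K₁ ⊆ U)
    (hg : DifferentiableOn ℂ g U) (hg₀ : g z₀ = 0) (ha : 0 < a)
    (hre : ∀ w ∈ K₁, (g w).re ≤ a) {z : E} (hz : z ∈ K) :
    (1 - δ) * ‖g z‖ ≤ 2 * δ * a := by
  set V := U ∩ (fun w => (g w).re) ⁻¹' Set.Iio (2 * a)
  have hV : IsOpen V :=
    (Complex.continuous_re.comp_continuousOn hg.continuousOn).isOpen_inter_preimage hU isOpen_Iio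
  have hK₁V : K₁ ⊆ V := fun w hw =>
    ⟨hK₁U hw, show (g w).re < 2 * a by linarith [hre w hw]⟩
  have hne : ∀ w ∈ V, (2 * a : ℂ) - g w ≠ 0 := fun w hw h0 => by
    have hre0 : 2 * a - (g w).re = 0 := by simpa using congrArg Complex.re h0
    have hw2 : (g w).re < 2 * a := hw.2
    linarith
  set h : E → ℂ := fun w => g w / (2 * a - g w)
  have hgV : DifferentiableOn ℂ g V := hg.mono Set.inter_subset_left
  have hh : DifferentiableOn ℂ h V := by
    simp only [h, div_eq_mul_inv]
    exact hgV.mul (((differentiableOn_const _).sub hgV).inv hne)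
  have hhb : ∀ w ∈ K₁, ‖h w‖ ≤ 1 := fun w hw => by
    rw [norm_div]
    exact div_le_one_of_le₀ (Complex.norm_le_norm_two_mul_sub_of_re_le ha.le (hre w hw))
      (norm_nonneg _)
  have hhz : ‖h z‖ ≤ δ := hS V h hV hK₁V hh (by simp [h, hg₀]) hhb z hz
  have hgz : ‖g z‖ ≤ δ * (2 * a + ‖g z‖) := calc
    ‖g z‖ = ‖h z‖ * ‖(2 * a : ℂ) - g z‖ := by
      rw [← norm_mul, div_mul_cancel₀ _ (hne z (hK₁V (hKK₁ hz)))]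
    _ ≤ δ * (2 * a + ‖g z‖) := by
      gcongr
      · exact (norm_nonneg _).trans hhz
      · refine (norm_sub_le _ _).trans_eq ?_
        simp [abs_of_pos ha]
  linarith

theorem stmt15_general (d : ℕ) (D : Set (Cd d)) (hD : IsOpen D)
    (hL : LiouvilleProperty D) (z₀ : Cd d) (K : Set (Cd d)) (hK : IsCompact K)
    (hKD : K ⊆ D) (hz₀K : z₀ ∈ K) (ε : ℝ) (hε : 0 < ε) :
    ∃ K₁ : Set (Cd d), IsCompact K₁ ∧ K₁ ⊆ D ∧ K ⊆ K₁ ∧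
      ∀ (U : Set (Cd d)) (f : Cd d → ℂ), IsOpen U → K₁ ⊆ U → DifferentiableOn ℂ f U →
        supNorm (fun z => f z - f z₀) K ≤
          ε * sSup ((fun z => (f z - f z₀).re) '' K₁) := by
  obtain ⟨K₁, hK₁, hK₁D, hKK₁, hS⟩ :=
    hL.exists_schwarzBound hD hK hKD hz₀K (δ := ε / (2 + ε)) (by positivity)
  refine ⟨K₁, hK₁, hK₁D, hKK₁, fun U f hU hK₁U hf => ?_⟩
  set A := sSup ((fun z => (f z - f z₀).re) '' K₁)
  have hbdd : BddAbove ((fun z => (f z - f z₀).re) '' K₁) :=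
    (hK₁.image_of_continuousOn (Complex.continuous_re.comp_continuousOn
      ((hf.continuousOn.mono hK₁U).sub continuousOn_const))).bddAbove
  have hA : 0 ≤ A := le_csSup_of_le hbdd ⟨z₀, hKK₁ hz₀K, rfl⟩ (by simp)
  have hbound : ∀ z ∈ K, ∀ a, A < a → ‖f z - f z₀‖ ≤ ε * a := by
    intro z hz a ha
    have := hS.mul_norm_le_of_re_le hKK₁ hU hK₁U (hf.sub_const (f z₀)) (sub_self _)
      (hA.trans_lt ha) (fun w hw => (le_csSup hbdd ⟨w, hw, rfl⟩).trans ha.le) hz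
    field_simp at this
    linarith
  refine Real.sSup_le (fun _ ⟨z, hz, hzr⟩ => hzr ▸ ?_) (by positivity)
  exact (div_le_iff₀' hε).1
    (le_of_forall_gt_imp_ge_of_dense fun a ha => (div_le_iff₀' hε).2 (hbound z hz a ha))

/-- Borel–Carathéodory for Liouville domains: if `D ⊆ ℂ^d` is a domain
with the Liouville Property, `z₀ ∈ K ⊆ D` with `K` compact, and `ε > 0`, then there is a
compact `K₁ ⊆ D` with `sup_K |f - f(z₀)| ≤ ε ⬝ sup_{K₁} Re(f - f(z₀))` for every `f`
analytic on an open neighborhood of `K₁`. -/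
theorem stmt15 (d : ℕ) (D : Set (Cd d)) (hD : IsOpen D) (hDconn : IsConnected D)
    (hL : LiouvilleProperty D) (z₀ : Cd d) (K : Set (Cd d)) (hK : IsCompact K)
    (hKD : K ⊆ D) (hz₀K : z₀ ∈ K) (ε : ℝ) (hε : 0 < ε) :
    ∃ K₁ : Set (Cd d), IsCompact K₁ ∧ K₁ ⊆ D ∧ K ⊆ K₁ ∧
      ∀ (U : Set (Cd d)) (f : Cd d → ℂ), IsOpen U → K₁ ⊆ U → DifferentiableOn ℂ f U →
        supNorm (fun z => f z - f z₀) K ≤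
          ε * sSup ((fun z => (f z - f z₀).re) '' K₁) :=
  stmt15_general d D hD hL z₀ K hK hKD hz₀K ε hε
end
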